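/- arXiv:math/0511200 — 2 statements merged into one kernel-verified Lean document; each statement's English description precedes it below -/
import Mathlib

section
/- A parking function a of length n ≥ 1 is prime if and only if there do not exist nonempty parking functions u and v such that a belongs to the shifted shuffle u⋒v; that is, the prime parking functions are exactly those parking functions that do not occur in any nontrivial shifted shuffle of parking functions. -/
/-- A word over the positive integers is a parking function if, for every
`i` with `1 ≤ i ≤ n` (where `n` is its length), at least `i` of its letters
are `≤ i`; this is equivalent to the condition that its nondecreasing
rearrangement `a'` satisfies `a'ᵢ ≤ i` for all `i`. -/
def IsParkingFunction (w : List ℕ) : Prop :=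
  (∀ x ∈ w, 1 ≤ x) ∧
  ∀ i : ℕ, 1 ≤ i → i ≤ w.length → i ≤ (w.filter (fun x => x ≤ i)).length

/-- `b` is a breakpoint of the word `w` if exactly `b` letters of `w` are `≤ b`. -/
def IsBreakpoint (w : List ℕ) (b : ℕ) : Prop :=
  (w.filter (fun x => x ≤ b)).length = b

/-- A parking function is prime if its only breakpoints are the trivial ones,
`0` and its length. -/
def IsPrimeParkingFunction (w : List ℕ) : Prop :=
  IsParkingFunction w ∧ ∀ b, IsBreakpoint w b → b = 0 ∨ b = w.length

/-- `IsShuffle u v w` means that `w` is a shuffle (interleaving) of `u` and `v`. -/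
inductive IsShuffle : List ℕ → List ℕ → List ℕ → Prop
  | nil : IsShuffle [] [] []
  | left {a : ℕ} {u v w : List ℕ} : IsShuffle u v w → IsShuffle (a :: u) v (a :: w)
  | right {b : ℕ} {u v w : List ℕ} : IsShuffle u v w → IsShuffle u (b :: v) (b :: w)

lemma shuffle_perm {u v w : List ℕ} (h : IsShuffle u v w) : w.Perm (u ++ v) := by
  induction h with
  | nil => simp
  | left _ ih => exact ih.cons _
  | right _ ih => exact (ih.cons _).trans List.perm_middle.symm

lemma shuffle_filter (p : ℕ → Bool) :
    ∀ w : List ℕ, IsShuffle (w.filter p) (w.filter (fun x => !p x)) w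
  | [] => IsShuffle.nil
  | a :: w => by
    rcases hpa : p a with _ | _
    · simpa [List.filter_cons, hpa] using IsShuffle.right (shuffle_filter p w)
    · simpa [List.filter_cons, hpa] using IsShuffle.left (shuffle_filter p w)

lemma countP_split (p q : ℕ → Bool) (l : List ℕ) :
    l.countP p = l.countP (fun x => p x && q x) + l.countP (fun x => p x && !q x) := by
  induction l with
  | nil => simp
  | cons a l ih =>
    simp only [List.countP_cons]
    cases p a <;> cases q a <;> simp <;> omega

/-- A parking function `a` of length `n ≥ 1` is prime if and only if there do not
exist nonempty parking functions `u` and `v` such that `a` belongs to the shifted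
shuffle `u ⋒ v`. -/
theorem prime_iff_not_in_shiftedShuffle (a : List ℕ) (ha : IsParkingFunction a)
    (hne : a ≠ []) :
    IsPrimeParkingFunction a ↔
      ¬ ∃ u v : List ℕ, u ≠ [] ∧ v ≠ [] ∧ IsParkingFunction u ∧ IsParkingFunction v ∧
          IsShuffle u (v.map (· + u.length)) a := by
  constructor
  · rintro hprime ⟨u, v, hu, hv, hpu, hpv, hsh⟩
    set k := u.length with hk
    have hperm := shuffle_perm hsh
    have hku : u.countP (fun x => x ≤ k) = k := by
      refine le_antisymm (by simpa using List.countP_le_length (p := fun x => decide (x ≤ k)) (l := u)) ?_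
      have h1 : 1 ≤ k := by
        cases u with
        | nil => exact absurd rfl hu
        | cons a u => simp [hk]
      have := hpu.2 k h1 le_rfl
      rwa [← List.countP_eq_length_filter] at this
    have hkv : (v.map (· + k)).countP (fun x => x ≤ k) = 0 := by
      rw [List.countP_map, List.countP_eq_zero]
      intro x hx
      have := hpv.1 x hx
      simp only [Function.comp_apply, Function.comp, decide_eq_true_eq]
      omega
    have hbp : IsBreakpoint a k := by
      unfold IsBreakpoint
      rw [← List.countP_eq_length_filter, hperm.countP_eq, List.countP_append, hku, hkv]
      omega
    have hlen : a.length = k + v.length := by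
      have := hperm.length_eq
      simpa using this
    have hvlen : 1 ≤ v.length := by
      cases v with
      | nil => exact absurd rfl hv
      | cons a v => simp
    have h1 : 1 ≤ k := by
      cases u with
      | nil => exact absurd rfl hu
      | cons a u => simp [hk]
    rcases hprime.2 k hbp with h | h <;> omega
  · intro hnd
    refine ⟨ha, ?_⟩
    by_contra hbad
    push_neg at hbad
    obtain ⟨b, hbp, hb0, hbl⟩ := hbad
    apply hnd
    set p : ℕ → Bool := fun x => x ≤ b with hp
    set u : List ℕ := a.filter p with hudef
    set w2 : List ℕ := a.filter (fun x => !p x) with hw2def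
    have hsh : IsShuffle u w2 a := shuffle_filter p a
    have hulen : u.length = b := hbp
    have halen : a.length = u.length + w2.length := by
      simpa using (shuffle_perm hsh).length_eq
    have hw2mem : ∀ x ∈ w2, b < x := by
      intro x hx
      have := List.of_mem_filter hx
      simp [hp] at this
      omega
    have hble : b ≤ a.length := by
      rw [← hulen, hudef]
      exact List.length_filter_le _ _
    have hw2len : w2.length = a.length - b := by omega
    set v : List ℕ := w2.map (fun x => x - b) with hvdef
    have hvmap : v.map (· + u.length) = w2 := by
      rw [hulen, hvdef, List.map_map]
      refine List.map_congr_left ?_ |>.trans (List.map_id _)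
      intro x hx
      have := hw2mem x hx
      simp only [Function.comp, id]
      omega
    refine ⟨u, v, ?_, ?_, ?_, ?_, hvmap ▸ hsh⟩
    · intro h
      apply hb0
      rw [← hulen, h, List.length_nil]
    · intro h
      apply hbl
      have hw2nil : w2 = [] := by rw [← hvmap, h]; rfl
      rw [hw2nil, List.length_nil] at halen
      omega
    · constructor
      · intro x hx
        exact ha.1 x (List.mem_of_mem_filter hx)
      · intro i hi1 hi2
        rw [hulen] at hi2
        rw [← List.countP_eq_length_filter, hudef, List.countP_filter]
        have : a.countP (fun x => decide (x ≤ i) && p x) = a.countP (fun x => x ≤ i) := by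
          apply List.countP_congr
          intro x _
          simp [hp]
          omega
        rw [this, List.countP_eq_length_filter]
        exact ha.2 i hi1 (le_trans hi2 hble)
    · constructor
      · intro y hy
        rw [hvdef] at hy
        obtain ⟨x, hx, rfl⟩ := List.mem_map.1 hy
        have := hw2mem x hx
        omega
      · intro i hi1 hi2
        rw [← List.countP_eq_length_filter, hvdef, List.countP_map]
        have e1 : w2.countP ((fun x => decide (x ≤ i)) ∘ fun x => x - b)
            = w2.countP (fun x => x ≤ b + i) := by
          apply List.countP_congr
          intro x _
          simp [Function.comp]
          omega
        rw [e1, hw2def, List.countP_filter]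
        have hsplit := countP_split (fun x => decide (x ≤ b + i)) p a
        have e2 : a.countP (fun x => decide (x ≤ b + i) && p x) = a.countP (fun x => x ≤ b) := by
          apply List.countP_congr
          intro x _
          simp [hp]
          omega
        have e3 : a.countP (fun x => x ≤ b) = b := by
          rw [List.countP_eq_length_filter]; exact hbp
        have hbi : b + i ≤ a.length := by
          rw [hvdef, List.length_map, hw2len] at hi2
          omega
        have hge : b + i ≤ a.countP (fun x => decide (x ≤ b + i)) := by
          rw [List.countP_eq_length_filter]
          exact ha.2 (b + i) (by omega) hbi
        rw [e2, e3] at hsplit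
        omega
end

section
/- Let I = (i_1,…,i_r) be a composition of n. The number of parking functions of length n of type I equals the multinomial coefficient n!/(i_1!⋯i_r!) multiplied by the product Π_{k=1}^{r} |PPF_{i_k}|, where |PPF_1| = 1 and |PPF_m| = (m−1)^{m−1} for m ≥ 2. -/
/-- A word (over the positive integers) is connected if it cannot be written as the
shifted concatenation `u ++ v.map (· + u.length)` of two nonempty words over the
positive integers. -/
def Connected (w : List ℕ) : Prop :=
  ¬ ∃ u v : List ℕ, u ≠ [] ∧ v ≠ [] ∧ (∀ x ∈ u, 1 ≤ x) ∧ (∀ x ∈ v, 1 ≤ x) ∧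
      w = u ++ v.map (· + u.length)

/-- Shifted concatenation of a list of words. -/
def sconcat : List (List ℕ) → List ℕ
  | [] => []
  | u :: L => u ++ (sconcat L).map (· + u.length)

/-- A parking function `a` of length `n` is of type `I = (i₁,…,i_r)` if the maximal
factorization of its nondecreasing rearrangement `a↑` as a shifted concatenation of
nondecreasing prime parking functions has factors of lengths `i₁,…,i_r`. -/
def HasType (a : List ℕ) (I : List ℕ) : Prop :=
  ∃ L : List (List ℕ),
    (∀ w ∈ L, List.Pairwise (· ≤ ·) w ∧ IsPrimeParkingFunction w) ∧
    (sconcat L).Perm a ∧ L.map List.length = I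

/-! ### count function -/

def cnt (w : List ℕ) (t : ℕ) : ℕ := (w.filter (fun x => x ≤ t)).length

lemma cnt_perm {w w' : List ℕ} (h : w.Perm w') (t : ℕ) : cnt w t = cnt w' t :=
  (h.filter _).length_eq

lemma cnt_append (u v : List ℕ) (t : ℕ) : cnt (u ++ v) t = cnt u t + cnt v t := by
  simp [cnt, List.filter_append]

lemma cnt_mono (w : List ℕ) {s t : ℕ} (h : s ≤ t) : cnt w s ≤ cnt w t := by
  induction w with
  | nil => simp [cnt]
  | cons x w ih =>
    simp only [cnt, List.filter_cons]
    by_cases hx : x ≤ s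
    · simp [hx, hx.trans h, cnt] at ih ⊢; omega
    · by_cases hx' : x ≤ t <;> simp [hx, hx', cnt] at ih ⊢ <;> omega

lemma cnt_le_length (w : List ℕ) (t : ℕ) : cnt w t ≤ w.length :=
  List.length_filter_le _ _

lemma cnt_eq_length_of_all {w : List ℕ} {t : ℕ} (h : ∀ x ∈ w, x ≤ t) :
    cnt w t = w.length := by
  unfold cnt
  rw [List.filter_eq_self.2 (fun x hx => by simpa using h x hx)]

lemma cnt_eq_zero_of_all {w : List ℕ} {t : ℕ} (h : ∀ x ∈ w, t < x) :
    cnt w t = 0 := by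
  unfold cnt
  rw [List.filter_eq_nil_iff.2 (fun x hx => by simpa using Nat.not_le.2 (h x hx))]
  rfl

lemma all_le_of_cnt_eq_length {w : List ℕ} {t : ℕ} (h : w.length ≤ cnt w t) :
    ∀ x ∈ w, x ≤ t := by
  have := List.length_filter_eq_length_iff.1 (le_antisymm (cnt_le_length w t) h)
  intro x hx; simpa using this x hx

lemma isParkingFunction_perm {w w' : List ℕ} (h : w.Perm w')
    (hw : IsParkingFunction w) : IsParkingFunction w' := by
  obtain ⟨h1, h2⟩ := hw
  refine ⟨fun x hx => h1 x (h.mem_iff.2 hx), fun i hi hlen => ?_⟩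
  have := h2 i hi (by rwa [h.length_eq])
  calc i ≤ cnt w i := this
  _ = cnt w' i := cnt_perm h i

lemma isPrimeParkingFunction_perm {w w' : List ℕ} (h : w.Perm w')
    (hw : IsPrimeParkingFunction w) : IsPrimeParkingFunction w' := by
  obtain ⟨h1, h2⟩ := hw
  refine ⟨isParkingFunction_perm h h1, fun b hb => ?_⟩
  rw [← h.length_eq]
  exact h2 b (by unfold IsBreakpoint at hb ⊢; rw [show ((w.filter fun x => x ≤ b).length) = cnt w b from rfl, cnt_perm h]; exact hb)

/-- letters of a parking function of length n with 1 ≤ n are all ≤ n -/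
lemma pf_letters_le {w : List ℕ} (hw : IsParkingFunction w) (hlen : 1 ≤ w.length) :
    ∀ x ∈ w, x ≤ w.length := by
  apply all_le_of_cnt_eq_length
  exact hw.2 w.length hlen le_rfl

/-! ### prime parking function characterization -/

lemma ppf_iff {w : List ℕ} {q : ℕ} (hq : 1 ≤ q) (hlen : w.length = q + 1) :
    IsPrimeParkingFunction w ↔
      (∀ x ∈ w, 1 ≤ x ∧ x ≤ q) ∧ ∀ t, 1 ≤ t → t ≤ q → t + 1 ≤ cnt w t := by
  constructor
  · rintro ⟨⟨h1, h2⟩, hp⟩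
    have key : ∀ t, 1 ≤ t → t ≤ q → t + 1 ≤ cnt w t := by
      intro t ht htq
      have hge : t ≤ cnt w t := h2 t ht (by omega)
      rcases Nat.lt_or_ge (cnt w t) (t+1) with h | h
      · exfalso
        have : IsBreakpoint w t := by unfold IsBreakpoint; show cnt w t = t; omega
        rcases hp t this with h0 | h0 <;> omega
      · exact h
    refine ⟨fun x hx => ⟨h1 x hx, ?_⟩, key⟩
    have : q + 1 ≤ cnt w q := key q hq le_rfl
    exact all_le_of_cnt_eq_length (by omega) x hx
  · rintro ⟨h1, h2⟩
    refine ⟨⟨fun x hx => (h1 x hx).1, fun i hi hile => ?_⟩, fun b hb => ?_⟩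
    · show i ≤ cnt w i
      rcases Nat.lt_or_ge i (q+1) with h | h
      · have := h2 i hi (by omega); omega
      · have : i = q + 1 := by omega
        subst this
        have := h2 q hq le_rfl
        have := cnt_mono w (show q ≤ q + 1 by omega)
        omega
    · have hb' : cnt w b = b := hb
      rcases Nat.eq_zero_or_pos b with h0 | h0
      · left; exact h0
      rcases Nat.lt_or_ge q b with h | h
      · right
        have := cnt_le_length w b
        omega
      · exfalso; have := h2 b h0 h; omega

lemma ppf_one {w : List ℕ} (hlen : w.length = 1) :
    IsPrimeParkingFunction w ↔ w = [1] := by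
  constructor
  · rintro ⟨⟨h1, h2⟩, -⟩
    match w, hlen with
    | [x], _ =>
      have hx1 : 1 ≤ x := h1 x (by simp)
      have := h2 1 le_rfl (by simp)
      have hx2 : x ≤ 1 := by
        by_contra hc
        simp [List.filter, show ¬ (x ≤ 1) from hc] at this
      simp [show x = 1 by omega]
  · rintro rfl
    refine ⟨⟨by simp, fun i hi hile => ?_⟩, fun b hb => ?_⟩
    · simp only [List.length_cons, List.length_nil] at hile
      interval_cases i; simp [List.filter]
    · have hb' : cnt [1] b = b := hb
      rcases Nat.eq_zero_or_pos b with h0 | h0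
      · left; exact h0
      · right
        have := cnt_le_length [1] b
        simp at this
        omega

lemma ppf_is_singleton {w : List ℕ} (hlen : w.length = 1) :
    IsPrimeParkingFunction w ↔ w = [1] := ppf_one hlen

/-! ### more cnt lemmas -/

lemma cnt_cons (x : ℕ) (a : List ℕ) (t : ℕ) :
    cnt (x :: a) t = cnt a t + if x ≤ t then 1 else 0 := by
  by_cases h : x ≤ t
  · rw [if_pos h]
    show (List.filter _ (x :: a)).length = _
    rw [List.filter_cons_of_pos (by simpa using h)]
    simp [cnt]
  · rw [if_neg h]
    show (List.filter _ (x :: a)).length = _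
    rw [List.filter_cons_of_neg (by simpa using h)]
    simp [cnt]

lemma cnt_filter_le {i t : ℕ} (h : t ≤ i) (a : List ℕ) :
    cnt (a.filter (fun x => x ≤ i)) t = cnt a t := by
  induction a with
  | nil => rfl
  | cons x a ih =>
    by_cases h1 : x ≤ i
    · rw [List.filter_cons_of_pos (by simpa using h1), cnt_cons, cnt_cons, ih]
    · rw [List.filter_cons_of_neg (by simpa using h1), cnt_cons, ih, if_neg (by omega)]
      omega

lemma cnt_map_sub {i : ℕ} {a : List ℕ} (h : ∀ x ∈ a, i < x) (t : ℕ) :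
    cnt (a.map (· - i)) t = cnt a (i + t) := by
  induction a with
  | nil => rfl
  | cons x a ih =>
    have hx : i < x := h x (by simp)
    have ih' := ih (fun y hy => h y (by simp [hy]))
    simp only [List.map_cons, cnt_cons, ih']
    congr 1
    have : (x - i ≤ t) ↔ (x ≤ i + t) := by omega
    simp [this]

lemma cnt_map_add (v : List ℕ) (i t : ℕ) :
    cnt (v.map (· + i)) (i + t) = cnt v t := by
  induction v with
  | nil => rfl
  | cons x v ih =>
    simp only [List.map_cons, cnt_cons, ih]
    congr 1
    have : (x + i ≤ i + t) ↔ (x ≤ t) := by omega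
    simp [this]

lemma cnt_map_add_zero {v : List ℕ} (h : ∀ x ∈ v, 1 ≤ x) {i t : ℕ} (ht : t ≤ i) :
    cnt (v.map (· + i)) t = 0 := by
  apply cnt_eq_zero_of_all
  intro y hy
  obtain ⟨x, hx, rfl⟩ := List.mem_map.1 hy
  have := h x hx
  omega

lemma sconcat_letters : ∀ {L : List (List ℕ)}, (∀ w ∈ L, ∀ x ∈ w, 1 ≤ x) →
    ∀ x ∈ sconcat L, 1 ≤ x := by
  intro L
  induction L with
  | nil => intro _ x hx; simp [sconcat] at hx
  | cons u L ih =>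
    intro h x hx
    rw [sconcat, List.mem_append] at hx
    rcases hx with hx | hx
    · exact h u (by simp) x hx
    · obtain ⟨y, hy, rfl⟩ := List.mem_map.1 hx
      have := ih (fun w hw => h w (by simp [hw])) y hy
      omega

lemma filter_lt_eq_filter_not_le (a : List ℕ) (i : ℕ) :
    a.filter (fun x => i < x) = a.filter (fun x => !(decide (x ≤ i))) :=
  List.filter_congr (fun x _ => by
    rw [← decide_not]
    exact decide_eq_decide.mpr (by omega))

lemma split_perm (a : List ℕ) (i : ℕ) :
    ((a.filter (fun x => x ≤ i)) ++ (a.filter (fun x => i < x))).Perm a := by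
  rw [filter_lt_eq_filter_not_le]
  exact List.filter_append_perm (fun x => x ≤ i) a

lemma length_filter_split (a : List ℕ) (i : ℕ) :
    (a.filter (fun x => x ≤ i)).length + (a.filter (fun x => i < x)).length = a.length := by
  have := (split_perm a i).length_eq
  simpa using this

/-! ### the splitting characterization -/

lemma split_iff {a : List ℕ} {i : ℕ} {I' : List ℕ} (hi : 1 ≤ i) :
    (IsParkingFunction a ∧ HasType a (i :: I')) ↔
      (cnt a i = i ∧
       IsPrimeParkingFunction (a.filter (fun x => x ≤ i)) ∧
       IsParkingFunction ((a.filter (fun x => i < x)).map (· - i)) ∧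
       HasType ((a.filter (fun x => i < x)).map (· - i)) I') := by
  constructor
  · rintro ⟨hPF, L, hL, hperm, hmap⟩
    match L, hmap with
    | w :: L', hmap =>
      simp only [List.map_cons, List.cons.injEq] at hmap
      obtain ⟨hwlen, hmap'⟩ := hmap
      have hw := hL w (by simp)
      have hL' : ∀ u ∈ L', List.Pairwise (· ≤ ·) u ∧ IsPrimeParkingFunction u :=
        fun u hu => hL u (by simp [hu])
      have hlet' : ∀ x ∈ sconcat L', 1 ≤ x :=
        sconcat_letters (fun u hu => (hL' u hu).2.1.1)
      have hwle : ∀ x ∈ w, x ≤ i := by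
        intro x hx
        have := pf_letters_le hw.2.1 (by omega) x hx
        omega
      have hsc : sconcat (w :: L') = w ++ (sconcat L').map (· + i) := by
        rw [sconcat, hwlen]
      have e1 : (w.filter (fun x => x ≤ i)) = w :=
        List.filter_eq_self.2 (fun x hx => by simpa using hwle x hx)
      have e2 : (((sconcat L').map (· + i)).filter (fun x => x ≤ i)) = [] :=
        List.filter_eq_nil_iff.2 (fun x hx => by
          obtain ⟨y, hy, rfl⟩ := List.mem_map.1 hx
          have := hlet' y hy
          simp; omega)
      have e3 : (w.filter (fun x => i < x)) = [] :=
        List.filter_eq_nil_iff.2 (fun x hx => by simpa using Nat.not_lt.2 (hwle x hx))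
      have e4 : (((sconcat L').map (· + i)).filter (fun x => i < x)) = (sconcat L').map (· + i) :=
        List.filter_eq_self.2 (fun x hx => by
          obtain ⟨y, hy, rfl⟩ := List.mem_map.1 hx
          have := hlet' y hy
          simp; omega)
      have hcnt : cnt a i = i := by
        rw [← cnt_perm hperm i, hsc, cnt_append,
          cnt_eq_length_of_all hwle, hwlen, cnt_map_add_zero hlet' le_rfl]
        omega
      have hfl : (a.filter (fun x => x ≤ i)).Perm w := by
        have h1 := (hperm.filter (fun x => x ≤ i))
        rw [hsc, List.filter_append, e1, e2, List.append_nil] at h1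
        exact h1.symm
      have hfh : (a.filter (fun x => i < x)).Perm ((sconcat L').map (· + i)) := by
        have h1 := (hperm.filter (fun x => i < x))
        rw [hsc, List.filter_append, e3, e4, List.nil_append] at h1
        exact h1.symm
      have hvperm : ((a.filter (fun x => i < x)).map (· - i)).Perm (sconcat L') := by
        have h2 := hfh.map (· - i)
        rw [List.map_map] at h2
        have e5 : ((sconcat L').map ((· - i) ∘ (· + i))) = sconcat L' := by
          rw [show ((· - i) ∘ (· + i) : ℕ → ℕ) = id from ?_, List.map_id]
          funext x; simp
        rwa [e5] at h2
      refine ⟨hcnt, isPrimeParkingFunction_perm hfl.symm hw.2, ?_, ⟨L', hL', hvperm.symm, hmap'⟩⟩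
      constructor
      · intro x hx
        obtain ⟨y, hy, rfl⟩ := List.mem_map.1 hx
        have := List.of_mem_filter hy
        simp at this
        omega
      · intro t ht htle
        show t ≤ cnt _ t
        rw [cnt_map_sub (fun x hx => by simpa using List.of_mem_filter hx) t]
        rw [List.length_map] at htle
        have hls := length_filter_split a i
        have hfalen : i ≤ a.length := hcnt ▸ cnt_le_length a i
        have hulen : (a.filter (fun x => x ≤ i)).length = i := hcnt
        have hmain := hPF.2 (i + t) (by omega) (by omega)
        have h2 : cnt a (i + t) = cnt (a.filter (fun x => x ≤ i)) (i + t)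
            + cnt (a.filter (fun x => i < x)) (i + t) := by
          rw [← cnt_perm (split_perm a i) (i + t), cnt_append]
        have h3 : cnt (a.filter (fun x => x ≤ i)) (i + t) ≤ i :=
          le_trans (cnt_le_length _ _) (le_of_eq hulen)
        have h4 : i + t ≤ cnt a (i + t) := hmain
        omega
  · rintro ⟨hcnt, hu, hv, L', hL', hperm', hmap'⟩
    have hulen : (a.filter (fun x => x ≤ i)).length = i := hcnt
    have huletters : ∀ x ∈ a.filter (fun x => x ≤ i), 1 ≤ x := hu.1.1
    have hvletters : ∀ x ∈ a.filter (fun x => i < x), i < x :=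
      fun x hx => by simpa using List.of_mem_filter hx
    have haletters : ∀ x ∈ a, 1 ≤ x := by
      intro x hx
      by_cases h : x ≤ i
      · exact huletters x (List.mem_filter.2 ⟨hx, by simpa using h⟩)
      · omega
    have hls := length_filter_split a i
    have hPF : IsParkingFunction a := by
      refine ⟨haletters, fun t ht htle => ?_⟩
      show t ≤ cnt a t
      have h2 : cnt a t = cnt (a.filter (fun x => x ≤ i)) t
          + cnt (a.filter (fun x => i < x)) t := by
        rw [← cnt_perm (split_perm a i) t, cnt_append]
      by_cases hti : t ≤ i
      · have := hu.1.2 t ht (by omega)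
        have h3 : t ≤ cnt (a.filter (fun x => x ≤ i)) t := this
        omega
      · have h5 : cnt (a.filter (fun x => x ≤ i)) t
            = (a.filter (fun x => x ≤ i)).length :=
          cnt_eq_length_of_all (fun x hx => by
            have := List.of_mem_filter (p := fun x => decide (x ≤ i)) hx
            simp at this; omega)
        have h6 : cnt (a.filter (fun x => i < x)) t
            = cnt ((a.filter (fun x => i < x)).map (· - i)) (t - i) := by
          rw [cnt_map_sub hvletters, show i + (t - i) = t by omega]
        have h7 := hv.2 (t - i) (by omega) (by rw [List.length_map]; omega)
        have h7' : t - i ≤ cnt ((a.filter (fun x => i < x)).map (· - i)) (t - i) := h7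
        omega
    refine ⟨hPF, ?_⟩
    refine ⟨(a.filter (fun x => x ≤ i)).mergeSort :: L', ?_, ?_, ?_⟩
    · intro u hu'
      rcases List.mem_cons.1 hu' with rfl | h
      · exact ⟨List.pairwise_mergeSort' _ _,
          isPrimeParkingFunction_perm (List.mergeSort_perm _ _).symm hu⟩
      · exact hL' u h
    · have hslen : ((a.filter (fun x => x ≤ i)).mergeSort).length = i := by
        rw [(List.mergeSort_perm _ _).length_eq, hulen]
      rw [sconcat, hslen]
      have p1 : ((a.filter (fun x => x ≤ i)).mergeSort).Perm (a.filter (fun x => x ≤ i)) :=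
        List.mergeSort_perm _ _
      have p2 : ((sconcat L').map (· + i)).Perm
          (((a.filter (fun x => i < x)).map (· - i)).map (· + i)) := hperm'.map _
      have e6 : ((a.filter (fun x => i < x)).map (· - i)).map (· + i)
          = a.filter (fun x => i < x) := by
        rw [List.map_map]
        refine (List.map_congr_left (fun x hx => ?_)).trans (List.map_id _)
        have := hvletters x hx
        simp; omega
      rw [e6] at p2
      exact (p1.append p2).trans (split_perm a i)
    · rw [List.map_cons, hmap', (List.mergeSort_perm _ _).length_eq, hulen]

/-! ### merging by a boolean mask -/

def bmerge : List Bool → List ℕ → List ℕ → List ℕ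
  | [], _, _ => []
  | true :: m, x :: u, v => x :: bmerge m u v
  | true :: _, [], _ => []
  | false :: m, u, y :: v => y :: bmerge m u v
  | false :: _, _, [] => []

lemma bmerge_split (p : ℕ → Bool) (a : List ℕ) :
    bmerge (a.map p) (a.filter p) (a.filter (fun x => !p x)) = a := by
  induction a with
  | nil => rfl
  | cons x a ih =>
    by_cases h : p x = true
    · rw [List.map_cons, h, List.filter_cons_of_pos h,
        List.filter_cons_of_neg (by simp [h])]
      rw [show bmerge (true :: a.map p) (x :: a.filter p) (a.filter (fun x => !p x))
          = x :: bmerge (a.map p) (a.filter p) (a.filter (fun x => !p x)) from rfl, ih]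
    · have h' : p x = false := by simpa using h
      rw [List.map_cons, h', List.filter_cons_of_neg (by simp [h']),
        List.filter_cons_of_pos (by simp [h'])]
      rw [show bmerge (false :: a.map p) (a.filter p) (x :: a.filter (fun x => !p x))
          = x :: bmerge (a.map p) (a.filter p) (a.filter (fun x => !p x)) from rfl, ih]

lemma bmerge_props (p : ℕ → Bool) :
    ∀ (m : List Bool) (u v : List ℕ), m.count true = u.length → m.count false = v.length →
    (∀ x ∈ u, p x = true) → (∀ x ∈ v, p x = false) →
    (bmerge m u v).map p = m ∧ (bmerge m u v).filter p = u ∧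
      (bmerge m u v).filter (fun x => !p x) = v := by
  intro m
  induction m with
  | nil =>
    intro u v h1 h2 _ _
    simp only [List.count_nil] at h1 h2
    rw [List.eq_nil_of_length_eq_zero h1.symm, List.eq_nil_of_length_eq_zero h2.symm]
    exact ⟨rfl, rfl, rfl⟩
  | cons b m ih =>
    intro u v h1 h2 hu hv
    cases b
    · -- false head
      match v, h2 with
      | y :: v, h2 =>
        have hy : p y = false := hv y (by simp)
        have r1 : m.count true = u.length := by simpa using h1
        have r2 : m.count false = v.length := by
          simp [List.count_cons] at h2; omega
        obtain ⟨e1, e2, e3⟩ := ih u v r1 r2 hu (fun x hx => hv x (by simp [hx]))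
        rw [show bmerge (false :: m) u (y :: v) = y :: bmerge m u v from rfl]
        refine ⟨?_, ?_, ?_⟩
        · rw [List.map_cons, hy, e1]
        · rw [List.filter_cons_of_neg (by simp [hy]), e2]
        · rw [List.filter_cons_of_pos (by simp [hy]), e3]
      | [], h2 => simp [List.count_cons] at h2
    · -- true head
      match u, h1 with
      | x :: u, h1 =>
        have hx : p x = true := hu x (by simp)
        have r1 : m.count true = u.length := by
          simp [List.count_cons] at h1; omega
        have r2 : m.count false = v.length := by simpa using h2
        obtain ⟨e1, e2, e3⟩ := ih u v r1 r2 (fun z hz => hu z (by simp [hz])) hv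
        rw [show bmerge (true :: m) (x :: u) v = x :: bmerge m u v from rfl]
        refine ⟨?_, ?_, ?_⟩
        · rw [List.map_cons, hx, e1]
        · rw [List.filter_cons_of_pos (by simp [hx]), e2]
        · rw [List.filter_cons_of_neg (by simp [hx]), e3]
      | [], h1 => simp [List.count_cons] at h1

/-! ### finiteness -/

lemma finite_lists_nat {n B : ℕ} {Q : List ℕ → Prop}
    (H : ∀ l, l.length = n → Q l → ∀ x ∈ l, x ≤ B) :
    Finite {l : List ℕ // l.length = n ∧ Q l} := by
  apply Finite.of_injective (f := fun s : {l : List ℕ // l.length = n ∧ Q l} =>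
    (fun j : Fin n => (⟨s.val.get (Fin.cast s.prop.1.symm j),
      Nat.lt_succ_of_le (H s.val s.prop.1 s.prop.2 _ (List.get_mem _ _))⟩ : Fin (B + 1))))
  rintro ⟨l, hl⟩ ⟨l', hl'⟩ h
  have e1 := hl.1
  have e2 := hl'.1
  ext1
  show l = l'
  apply List.ext_get (by omega)
  intro j h1 h2
  have := congrFun h ⟨j, by omega⟩
  simpa using congrArg Fin.val this

lemma finite_lists_bool {n : ℕ} {Q : List Bool → Prop} :
    Finite {l : List Bool // l.length = n ∧ Q l} := by
  apply Finite.of_injective (f := fun s : {l : List Bool // l.length = n ∧ Q l} =>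
    (fun j : Fin n => s.val.get (Fin.cast s.prop.1.symm j)))
  rintro ⟨l, hl⟩ ⟨l', hl'⟩ h
  have e1 := hl.1
  have e2 := hl'.1
  ext1
  show l = l'
  apply List.ext_get (by omega)
  intro j h1 h2
  exact congrFun h ⟨j, by omega⟩

/-! ### counting boolean masks -/

def maskEquiv (n i : ℕ) :
    {m : List Bool // m.length = n + 1 ∧ m.count true = i} ≃
    ({m : List Bool // m.length = n ∧ m.count true = i} ⊕
     {m : List Bool // m.length = n ∧ m.count true + 1 = i}) where
  toFun := fun s => match s with
    | ⟨false :: m', h⟩ => Sum.inl ⟨m', by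
        simp only [List.length_cons, List.count_cons] at h
        constructor
        · omega
        · simpa using h.2⟩
    | ⟨true :: m', h⟩ => Sum.inr ⟨m', by
        simp only [List.length_cons, List.count_cons] at h
        constructor
        · omega
        · simp at h
          omega⟩
    | ⟨[], h⟩ => absurd h.1 (by simp)
  invFun := fun s => match s with
    | Sum.inl ⟨m', h⟩ => ⟨false :: m', by
        simp only [List.length_cons, List.count_cons]
        constructor
        · omega
        · simp
          exact h.2⟩
    | Sum.inr ⟨m', h⟩ => ⟨true :: m', by
        simp only [List.length_cons, List.count_cons]
        constructor
        · omega
        · simp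
          omega⟩
  left_inv := by
    rintro ⟨m, h⟩
    match m, h with
    | [], h => exact absurd h.1 (by simp)
    | false :: m', h => rfl
    | true :: m', h => rfl
  right_inv := by rintro (⟨m', h⟩ | ⟨m', h⟩) <;> rfl

lemma card_masks : ∀ n i : ℕ,
    Nat.card {m : List Bool // m.length = n ∧ m.count true = i} = n.choose i := by
  intro n
  induction n with
  | zero =>
    intro i
    rcases Nat.eq_zero_or_pos i with rfl | hi
    · rw [Nat.choose_zero_right]
      have : Unique {m : List Bool // m.length = 0 ∧ m.count true = 0} := by
        refine ⟨⟨⟨[], by simp⟩⟩, ?_⟩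
        rintro ⟨m, hm⟩
        ext1
        exact List.eq_nil_of_length_eq_zero hm.1
      exact Nat.card_unique
    · haveI : IsEmpty {m : List Bool // m.length = 0 ∧ m.count true = i} := by
        refine ⟨?_⟩
        rintro ⟨m, hm⟩
        rw [List.eq_nil_of_length_eq_zero hm.1] at hm
        simp at hm
        omega
      rw [Nat.card_of_isEmpty, Nat.choose_eq_zero_of_lt (by omega)]
  | succ n ih =>
    intro i
    rw [Nat.card_congr (maskEquiv n i)]
    haveI : Finite {m : List Bool // m.length = n ∧ m.count true = i} := finite_lists_bool
    haveI : Finite {m : List Bool // m.length = n ∧ m.count true + 1 = i} := finite_lists_bool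
    rw [Nat.card_sum]
    rcases Nat.eq_zero_or_pos i with rfl | hi
    · haveI : IsEmpty {m : List Bool // m.length = n ∧ m.count true + 1 = 0} := by
        refine ⟨?_⟩; rintro ⟨m, hm⟩; omega
      have hz : Nat.card {m : List Bool // m.length = n ∧ m.count true + 1 = 0} = 0 :=
        Nat.card_of_isEmpty
      rw [hz, ih 0]
      simp
    · obtain ⟨j, rfl⟩ : ∃ j, i = j + 1 := ⟨i - 1, by omega⟩
      have e : {m : List Bool // m.length = n ∧ m.count true + 1 = j + 1} ≃
          {m : List Bool // m.length = n ∧ m.count true = j} := by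
        apply Equiv.subtypeEquivRight
        intro m
        constructor <;> intro h <;> exact ⟨h.1, by omega⟩
      rw [Nat.card_congr e, ih (j + 1), ih j, Nat.choose_succ_succ]
      simp only [Nat.succ_eq_add_one]
      omega

/-! ### counting bounded words -/

def boundedConsEquiv (n q : ℕ) :
    {w : List ℕ // w.length = n + 1 ∧ ∀ x ∈ w, 1 ≤ x ∧ x ≤ q} ≃
    ({x : ℕ // 1 ≤ x ∧ x ≤ q} × {w : List ℕ // w.length = n ∧ ∀ x ∈ w, 1 ≤ x ∧ x ≤ q}) where
  toFun := fun s => match s with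
    | ⟨x :: w, h⟩ =>
      (⟨x, h.2 x (by simp)⟩, ⟨w, by
        have hl := h.1
        simp only [List.length_cons] at hl
        exact ⟨by omega, fun y hy => h.2 y (by simp [hy])⟩⟩)
    | ⟨[], h⟩ => absurd h.1 (by simp)
  invFun := fun s => ⟨s.1.val :: s.2.val, by
    constructor
    · simp [s.2.prop.1]
    · intro y hy
      rcases List.mem_cons.1 hy with rfl | h
      · exact s.1.prop
      · exact s.2.prop.2 y h⟩
  left_inv := by
    rintro ⟨w, h⟩
    match w, h with
    | [], h => exact absurd h.1 (by simp)
    | x :: w, h => rfl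
  right_inv := by rintro ⟨⟨x, hx⟩, ⟨w, hw⟩⟩; rfl

lemma card_interval (q : ℕ) : Nat.card {x : ℕ // 1 ≤ x ∧ x ≤ q} = q := by
  have e : {x : ℕ // 1 ≤ x ∧ x ≤ q} ≃ Fin q := by
    refine ⟨fun s => ⟨s.val - 1, by have := s.prop; omega⟩,
      fun j => ⟨j.val + 1, by have := j.isLt; omega⟩, ?_, ?_⟩
    · rintro ⟨x, hx⟩; ext; simp; omega
    · rintro ⟨j, hj⟩; ext; simp
  rw [Nat.card_congr e, Nat.card_eq_fintype_card, Fintype.card_fin]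

lemma card_bounded_words : ∀ n q : ℕ,
    Nat.card {w : List ℕ // w.length = n ∧ ∀ x ∈ w, 1 ≤ x ∧ x ≤ q} = q ^ n := by
  intro n
  induction n with
  | zero =>
    intro q
    have : Unique {w : List ℕ // w.length = 0 ∧ ∀ x ∈ w, 1 ≤ x ∧ x ≤ q} := by
      refine ⟨⟨⟨[], by simp⟩⟩, ?_⟩
      rintro ⟨w, hw⟩
      ext1
      exact List.eq_nil_of_length_eq_zero hw.1
    rw [Nat.card_unique, pow_zero]
  | succ n ih =>
    intro q
    rw [Nat.card_congr (boundedConsEquiv n q), Nat.card_prod, card_interval, ih, pow_succ]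
    ring

/-! ### auxiliary map lemmas -/

lemma count_true_map (p : ℕ → Bool) (a : List ℕ) :
    (a.map p).count true = (a.filter p).length := by
  induction a with
  | nil => rfl
  | cons x a ih =>
    by_cases h : p x = true
    · rw [List.map_cons, h, List.filter_cons_of_pos h]
      simp [List.count_cons, ih]
    · have h' : p x = false := by simpa using h
      rw [List.map_cons, h', List.filter_cons_of_neg (by simp [h']), List.count_cons, ih]
      simp

lemma count_true_add_count_false (m : List Bool) :
    m.count true + m.count false = m.length := by
  induction m with
  | nil => rfl
  | cons b m ih =>
    cases b <;> simp [List.count_cons] <;> omega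

lemma map_add_map_sub (l : List ℕ) (i : ℕ) : (l.map (· + i)).map (· - i) = l := by
  rw [List.map_map]
  refine (List.map_congr_left (fun x _ => ?_)).trans (List.map_id _)
  simp

lemma map_sub_map_add {l : List ℕ} {i : ℕ} (h : ∀ x ∈ l, i ≤ x) :
    (l.map (· - i)).map (· + i) = l := by
  rw [List.map_map]
  refine (List.map_congr_left (fun x hx => ?_)).trans (List.map_id _)
  have := h x hx
  simp; omega

/-! ### the recursion for the count -/

lemma bmerge_facts (i : ℕ) (hi : 1 ≤ i) {m : List Bool} {u v : List ℕ}
    (hm2 : m.count true = i) (hu1 : u.length = i) (huPF : IsParkingFunction u)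
    (hv1 : v.length + i = m.length) (hvletters : ∀ x ∈ v, 1 ≤ x) :
    (bmerge m u (v.map (· + i))).map (fun x => decide (x ≤ i)) = m ∧
    (bmerge m u (v.map (· + i))).filter (fun x => x ≤ i) = u ∧
    (bmerge m u (v.map (· + i))).filter (fun x => i < x) = v.map (· + i) := by
  have huP : ∀ x ∈ u, (fun x => decide (x ≤ i)) x = true := by
    intro x hx
    have h1 := pf_letters_le huPF (by omega) x hx
    rw [hu1] at h1
    simpa using h1
  have hvP : ∀ y ∈ v.map (· + i), (fun x => decide (x ≤ i)) y = false := by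
    intro y hy
    obtain ⟨x, hx, rfl⟩ := List.mem_map.1 hy
    have := hvletters x hx
    simp; omega
  have hc1 : m.count true = u.length := by rw [hm2, hu1]
  have hc2 : m.count false = (v.map (· + i)).length := by
    have := count_true_add_count_false m
    rw [List.length_map]
    omega
  obtain ⟨e1, e2, e3⟩ := bmerge_props (fun x => decide (x ≤ i)) m u (v.map (· + i))
    hc1 hc2 huP hvP
  exact ⟨e1, e2, by rw [filter_lt_eq_filter_not_le]; exact e3⟩

lemma card_typeSet_cons (i n : ℕ) (I' : List ℕ) (hi : 1 ≤ i) (hin : i ≤ n) :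
    Nat.card {a : List ℕ // a.length = n ∧ IsParkingFunction a ∧ HasType a (i :: I')}
      = n.choose i * (Nat.card {u : List ℕ // u.length = i ∧ IsPrimeParkingFunction u}
          * Nat.card {v : List ℕ // v.length = n - i ∧ IsParkingFunction v ∧ HasType v I'}) := by
  classical
  have e : {a : List ℕ // a.length = n ∧ IsParkingFunction a ∧ HasType a (i :: I')} ≃
      ({m : List Bool // m.length = n ∧ m.count true = i} ×
       ({u : List ℕ // u.length = i ∧ IsPrimeParkingFunction u} ×
        {v : List ℕ // v.length = n - i ∧ IsParkingFunction v ∧ HasType v I'})) := by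
    refine ⟨fun s =>
        (⟨s.val.map (fun x => decide (x ≤ i)), ?_⟩,
         ⟨s.val.filter (fun x => x ≤ i), ?_⟩,
         ⟨(s.val.filter (fun x => i < x)).map (· - i), ?_⟩),
      fun t => ⟨bmerge t.1.val t.2.1.val (t.2.2.val.map (· + i)), ?_⟩, ?_, ?_⟩
    · obtain ⟨hc, hu, hv, ht⟩ := (split_iff hi).1 ⟨s.prop.2.1, s.prop.2.2⟩
      exact ⟨by rw [List.length_map]; exact s.prop.1, by rw [count_true_map]; exact hc⟩
    · obtain ⟨hc, hu, hv, ht⟩ := (split_iff hi).1 ⟨s.prop.2.1, s.prop.2.2⟩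
      exact ⟨hc, hu⟩
    · obtain ⟨hc, hu, hv, ht⟩ := (split_iff hi).1 ⟨s.prop.2.1, s.prop.2.2⟩
      have hulen : (s.val.filter (fun x => x ≤ i)).length = i := hc
      have hvlen : (s.val.filter (fun x => i < x)).length = n - i := by
        have := length_filter_split s.val i
        have hn := s.prop.1
        omega
      exact ⟨by rw [List.length_map]; exact hvlen, hv, ht⟩
    · obtain ⟨⟨m, hm⟩, ⟨u, hu⟩, ⟨v, hv⟩⟩ := t
      have hvadd : v.length + i = m.length := by
        rw [hv.1, hm.1]; omega
      obtain ⟨e1, e2, e3⟩ := bmerge_facts i hi hm.2 hu.1 hu.2.1 hvadd hv.2.1.1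
      have hvv : ((bmerge m u (v.map (· + i))).filter (fun x => i < x)).map (· - i) = v := by
        rw [e3, map_add_map_sub]
      have hlen : (bmerge m u (v.map (· + i))).length = n := by
        have := congrArg List.length e1
        rw [List.length_map] at this
        rw [this, hm.1]
      have key := (split_iff (a := bmerge m u (v.map (· + i))) (I' := I') hi).2
        ⟨by show (List.filter _ _).length = i; rw [e2, hu.1],
         by rw [show ((bmerge m u (v.map (· + i))).filter (fun x => x ≤ i)) = u from e2]
            exact hu.2,
         by rw [hvv]; exact hv.2.1,
         by rw [hvv]; exact hv.2.2⟩
      exact ⟨hlen, key.1, key.2⟩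
    · rintro ⟨a, ha⟩
      ext1
      show bmerge (a.map (fun x => decide (x ≤ i))) (a.filter (fun x => x ≤ i))
          (((a.filter (fun x => i < x)).map (· - i)).map (· + i)) = a
      rw [map_sub_map_add (fun x hx => le_of_lt (by simpa using List.of_mem_filter hx)),
        filter_lt_eq_filter_not_le]
      exact bmerge_split (fun x => decide (x ≤ i)) a
    · rintro ⟨⟨m, hm⟩, ⟨u, hu⟩, ⟨v, hv⟩⟩
      have hvadd : v.length + i = m.length := by
        rw [hv.1, hm.1]; omega
      obtain ⟨e1, e2, e3⟩ := bmerge_facts i hi hm.2 hu.1 hu.2.1 hvadd hv.2.1.1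
      refine Prod.ext ?_ (Prod.ext ?_ ?_) <;> ext1
      · exact e1
      · exact e2
      · show ((bmerge m u (v.map (· + i))).filter (fun x => i < x)).map (· - i) = v
        rw [e3, map_add_map_sub]
  rw [Nat.card_congr e, Nat.card_prod, Nat.card_prod, card_masks]

/-! ### cyclic shifts and the cycle lemma -/

def shiftw (q d : ℕ) (w : List ℕ) : List ℕ := w.map (fun x => (x - 1 + d) % q + 1)

lemma shiftw_letters {q : ℕ} (hq : 1 ≤ q) (d : ℕ) (w : List ℕ) :
    ∀ x ∈ shiftw q d w, 1 ≤ x ∧ x ≤ q := by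
  intro x hx
  obtain ⟨y, _, rfl⟩ := List.mem_map.1 hx
  have := Nat.mod_lt (y - 1 + d) (show 0 < q by omega)
  omega

lemma shiftw_length (q d : ℕ) (w : List ℕ) : (shiftw q d w).length = w.length :=
  List.length_map _

lemma shiftw_shiftw (q d e : ℕ) (w : List ℕ) :
    shiftw q d (shiftw q e w) = shiftw q (e + d) w := by
  unfold shiftw
  rw [List.map_map]
  apply List.map_congr_left
  intro x _
  show ((x - 1 + e) % q + 1 - 1 + d) % q + 1 = (x - 1 + (e + d)) % q + 1
  rw [Nat.add_sub_cancel, Nat.mod_add_mod, ← Nat.add_assoc]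

lemma shiftw_zero_mod {q : ℕ} {w : List ℕ} (hw : ∀ x ∈ w, 1 ≤ x ∧ x ≤ q)
    {d : ℕ} (hd : d % q = 0) : shiftw q d w = w := by
  unfold shiftw
  refine (List.map_congr_left (fun x hx => ?_)).trans (List.map_id _)
  have hx' := hw x hx
  have h1 : (x - 1 + d) % q = (x - 1) % q := by
    simp [Nat.add_mod, hd]
  rw [h1, Nat.mod_eq_of_lt (by omega)]
  show x - 1 + 1 = x
  omega

/-- number of letters of `w` congruent to `s + 1` mod `q` -/
def resg (q : ℕ) (w : List ℕ) (s : ℕ) : ℕ :=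
  (w.filter (fun x => (x - 1) % q = s % q)).length

def Fh (q : ℕ) (w : List ℕ) (j : ℕ) : ℤ :=
  (∑ s ∈ Finset.range j, (resg q w s : ℤ)) - j

lemma resg_cons (q : ℕ) (x : ℕ) (w : List ℕ) (s : ℕ) :
    resg q (x :: w) s = resg q w s + if (x - 1) % q = s % q then 1 else 0 := by
  unfold resg
  by_cases h : (x - 1) % q = s % q
  · rw [List.filter_cons_of_pos (by simpa using h), if_pos h]
    simp
  · rw [List.filter_cons_of_neg (by simpa using h), if_neg h]
    simp

/-- the key single-letter residue count -/
lemma fact0 {q : ℕ} (hq : 1 ≤ q) (r j t : ℕ) (ht : t ≤ q) :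
    (∑ s ∈ Finset.range t, if (r % q = (j + s) % q) then (1 : ℕ) else 0)
      = if (r + (q - j % q)) % q < t then 1 else 0 := by
  have hq0 : 0 < q := by omega
  have hjq : j % q < q := Nat.mod_lt _ hq0
  set s₀ := (r + (q - j % q)) % q with hs₀
  have key : ∀ s, s < q → ((r % q = (j + s) % q) ↔ s = s₀) := by
    intro s hs
    constructor
    · intro h
      have h1 : r ≡ j + s [MOD q] := h
      have h2 : r + (q - j % q) ≡ j + s + (q - j % q) [MOD q] := h1.add_right _
      have h3 : j + s + (q - j % q) ≡ j % q + s + (q - j % q) [MOD q] :=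
        (((Nat.mod_modEq j q).symm.add_right s).add_right _)
      have h4 : j % q + s + (q - j % q) = s + q := by omega
      have h5 : r + (q - j % q) ≡ s + q [MOD q] := h2.trans (h4 ▸ h3)
      have h6 : (r + (q - j % q)) % q = (s + q) % q := h5
      rw [Nat.add_mod_right, Nat.mod_eq_of_lt hs] at h6
      omega
    · rintro rfl
      show r % q = (j + s₀) % q
      have h1a : j + s₀ ≡ j % q + s₀ [MOD q] := (Nat.mod_modEq j q).symm.add_right s₀
      have h1b : j % q + s₀ ≡ j % q + (r + (q - j % q)) [MOD q] :=
        (Nat.mod_modEq (r + (q - j % q)) q).add_left (j % q)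
      have h2 : j % q + (r + (q - j % q)) = r + q := by omega
      have h3 : j + s₀ ≡ r + q [MOD q] := by
        rw [← h2]
        exact h1a.trans h1b
      have h4 : (j + s₀) % q = (r + q) % q := h3
      rw [Nat.add_mod_right] at h4
      omega
  have hsum : (∑ s ∈ Finset.range t, if (r % q = (j + s) % q) then (1 : ℕ) else 0)
      = ∑ s ∈ Finset.range t, if s = s₀ then 1 else 0 := by
    apply Finset.sum_congr rfl
    intro s hs
    rw [if_congr (key s (lt_of_lt_of_le (Finset.mem_range.1 hs) ht)) rfl rfl]
  rw [hsum, Finset.sum_ite_eq' (Finset.range t) s₀ (fun _ => 1)]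
  simp [Finset.mem_range]

lemma offset_eq {q d : ℕ} (hq : 1 ≤ q) (hd : d ≤ q) (r : ℕ) :
    (r + (q - (q - d) % q)) % q = (r + d) % q := by
  rcases Nat.eq_or_lt_of_le hd with rfl | hdq
  · rw [Nat.sub_self, Nat.zero_mod, Nat.sub_zero, Nat.add_mod_right]
  · rcases Nat.eq_zero_or_pos d with rfl | hd0
    · rw [Nat.sub_zero, Nat.mod_self, Nat.sub_zero, Nat.add_mod_right, Nat.add_zero]
    · rw [show (q - d) % q = q - d from Nat.mod_eq_of_lt (by omega),
        show q - (q - d) = d from by omega]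

lemma cnt_shiftw {q : ℕ} (hq : 1 ≤ q) {d : ℕ} (hd : d ≤ q) {t : ℕ} (ht : t ≤ q)
    (w : List ℕ) :
    cnt (shiftw q d w) t = ∑ s ∈ Finset.range t, resg q w ((q - d) + s) := by
  induction w with
  | nil => simp [shiftw, cnt, resg]
  | cons x w ih =>
    have hcons : shiftw q d (x :: w) = ((x - 1 + d) % q + 1) :: shiftw q d w := rfl
    rw [hcons, cnt_cons, ih]
    have hresg : ∀ s : ℕ, resg q (x :: w) ((q - d) + s)
        = resg q w ((q - d) + s) + if (x - 1) % q = ((q - d) + s) % q then 1 else 0 :=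
      fun s => resg_cons q x w _
    rw [Finset.sum_congr rfl (fun s _ => hresg s), Finset.sum_add_distrib]
    congr 1
    rw [fact0 hq (x - 1) (q - d) t ht, offset_eq hq hd]
    have : ((x - 1 + d) % q + 1 ≤ t) ↔ ((x - 1 + d) % q < t) := by omega
    simp [this]

lemma resg_total {q : ℕ} (hq : 1 ≤ q) (w : List ℕ) (j : ℕ) :
    ∑ s ∈ Finset.range q, resg q w (j + s) = w.length := by
  induction w with
  | nil => simp [resg]
  | cons x w ih =>
    rw [Finset.sum_congr rfl (fun s _ => resg_cons q x w (j + s)), Finset.sum_add_distrib, ih]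
    rw [fact0 hq (x - 1) j q le_rfl]
    have : (x - 1 + (q - j % q)) % q < q := Nat.mod_lt _ (by omega)
    rw [if_pos this]
    simp

lemma Fh_period {q : ℕ} (hq : 1 ≤ q) {w : List ℕ} (hlen : w.length = q + 1) (j : ℕ) :
    Fh q w (j + q) = Fh q w j + 1 := by
  unfold Fh
  rw [Finset.sum_range_add]
  have : ∑ s ∈ Finset.range q, (resg q w (j + s) : ℤ) = (q : ℤ) + 1 := by
    rw [← Nat.cast_sum]
    rw [resg_total hq w j, hlen]
    push_cast
    ring
  rw [this]
  push_cast
  ring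

/-- the classical cycle lemma -/
lemma cycle_lemma {q : ℕ} (hq : 1 ≤ q) (F : ℕ → ℤ)
    (hper : ∀ j, F (j + q) = F j + 1) :
    ∃! a, (1 ≤ a ∧ a ≤ q) ∧ ∀ e, a < e → F a < F e := by
  have hne : (Finset.Icc 1 q).Nonempty := ⟨1, by simp [hq]⟩
  obtain ⟨b, hb, hbmin⟩ := Finset.exists_min_image (Finset.Icc 1 q) F hne
  set T := (Finset.Icc 1 q).filter (fun c => F c ≤ F b) with hT
  have hTne : T.Nonempty := ⟨b, Finset.mem_filter.2 ⟨hb, le_rfl⟩⟩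
  set a := T.max' hTne with ha
  have haT : a ∈ T := T.max'_mem hTne
  have haIcc : a ∈ Finset.Icc 1 q := (Finset.mem_filter.1 haT).1
  have hamin : ∀ c ∈ Finset.Icc 1 q, F a ≤ F c :=
    fun c hc => le_trans (Finset.mem_filter.1 haT).2 (hbmin c hc)
  have ha1 : 1 ≤ a := (Finset.mem_Icc.1 haIcc).1
  have haq : a ≤ q := (Finset.mem_Icc.1 haIcc).2
  have hmain : ∀ e, a < e → F a < F e := by
    intro e
    induction e using Nat.strong_induction_on with
    | _ e ih =>
      intro he
      by_cases heq : e ≤ q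
      · have heIcc : e ∈ Finset.Icc 1 q := Finset.mem_Icc.2 ⟨by omega, heq⟩
        have hle : F a ≤ F e := hamin e heIcc
        rcases eq_or_lt_of_le hle with heqF | h
        · exfalso
          have heT : e ∈ T := Finset.mem_filter.2 ⟨heIcc, heqF ▸ (Finset.mem_filter.1 haT).2⟩
          have := Finset.le_max' T e heT
          omega
        · exact h
      · have hee : e - q + q = e := by omega
        have hFe : F (e - q + q) = F (e - q) + 1 := hper (e - q)
        rw [hee] at hFe
        rcases Nat.lt_or_ge a (e - q) with h1 | h1
        · have := ih (e - q) (by omega) h1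
          omega
        · have he1 : 1 ≤ e - q := by omega
          have : F a ≤ F (e - q) := hamin (e - q) (Finset.mem_Icc.2 ⟨he1, by omega⟩)
          omega
  refine ⟨a, ⟨⟨ha1, haq⟩, hmain⟩, ?_⟩
  rintro a' ⟨⟨ha'1, ha'q⟩, hmain'⟩
  rcases lt_trichotomy a' a with h | h | h
  · exfalso
    have h1 : F a' < F a := hmain' a h
    have h2 : F a < F (a' + q) := hmain (a' + q) (by omega)
    have h3 : F (a' + q) = F a' + 1 := hper a'
    omega
  · exact h
  · exfalso
    have h1 : F a < F a' := hmain a' h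
    have h2 : F a' < F (a + q) := hmain' (a + q) (by omega)
    have h3 : F (a + q) = F a + 1 := hper a
    omega

lemma C_iff_D {q : ℕ} (hq : 1 ≤ q) (F : ℕ → ℤ)
    (hper : ∀ j, F (j + q) = F j + 1) (a : ℕ) :
    (∀ t, 1 ≤ t → t ≤ q → F a < F (a + t)) ↔ (∀ e, a < e → F a < F e) := by
  constructor
  · intro hC e
    induction e using Nat.strong_induction_on with
    | _ e ih =>
      intro he
      rcases le_or_gt (e - a) q with h1 | h1
      · have := hC (e - a) (by omega) h1
        rwa [show a + (e - a) = e by omega] at this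
      · have hee : e - q + q = e := by omega
        have hFe : F (e - q + q) = F (e - q) + 1 := hper (e - q)
        rw [hee] at hFe
        have := ih (e - q) (by omega) (by omega)
        omega
  · intro hD t ht htq
    exact hD (a + t) (by omega)

/-! ### prime shift characterization -/

lemma Fh_diff {q : ℕ} (w : List ℕ) (a t : ℕ) :
    (∑ s ∈ Finset.range t, (resg q w (a + s) : ℤ)) = Fh q w (a + t) - Fh q w a + t := by
  unfold Fh
  rw [Finset.sum_range_add]
  push_cast
  ring

lemma prime_shift_iff {q : ℕ} (hq : 1 ≤ q) {w : List ℕ} (hlen : w.length = q + 1)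
    (hw : ∀ x ∈ w, 1 ≤ x ∧ x ≤ q) {d : ℕ} (hd : d ≤ q) :
    IsPrimeParkingFunction (shiftw q d w) ↔
      ∀ t, 1 ≤ t → t ≤ q → Fh q w (q - d) < Fh q w ((q - d) + t) := by
  rw [ppf_iff hq (by rw [shiftw_length, hlen])]
  have hcast : ∀ t : ℕ, t ≤ q → ((cnt (shiftw q d w) t : ℤ))
      = Fh q w ((q - d) + t) - Fh q w (q - d) + t := by
    intro t htq
    rw [cnt_shiftw hq hd htq w, Nat.cast_sum, Fh_diff]
  constructor
  · rintro ⟨-, h2⟩ t ht htq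
    have h3 := h2 t ht htq
    have h4 := hcast t htq
    omega
  · intro h
    refine ⟨shiftw_letters hq d w, fun t ht htq => ?_⟩
    have h3 := h t ht htq
    have h4 := hcast t htq
    omega

lemma exists_unique_prime_shift {q : ℕ} (hq : 1 ≤ q) {w : List ℕ}
    (hlen : w.length = q + 1) (hw : ∀ x ∈ w, 1 ≤ x ∧ x ≤ q) :
    ∃! d, d < q ∧ IsPrimeParkingFunction (shiftw q d w) := by
  have hper := Fh_period hq hlen
  obtain ⟨a, ⟨⟨ha1, haq⟩, hD⟩, huniq⟩ := cycle_lemma hq (Fh q w) hper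
  refine ⟨q - a, ⟨by omega, ?_⟩, ?_⟩
  · rw [prime_shift_iff hq hlen hw (by omega), show q - (q - a) = a by omega]
    exact fun t ht htq => (C_iff_D hq _ hper a).2 hD t ht htq
  · rintro d ⟨hdq, hprime⟩
    have h1 := (prime_shift_iff hq hlen hw (le_of_lt hdq)).1 hprime
    have hDd := (C_iff_D hq _ hper (q - d)).1 h1
    have := huniq (q - d) ⟨⟨by omega, by omega⟩, hDd⟩
    omega

lemma shiftw_inverse {q : ℕ} (hq : 1 ≤ q) {d : ℕ} {v : List ℕ} (hdq : d < q)
    (hvlet : ∀ x ∈ v, 1 ≤ x ∧ x ≤ q) :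
    shiftw q ((q - d) % q) (shiftw q d v) = v := by
  rw [shiftw_shiftw]
  apply shiftw_zero_mod hvlet
  rcases Nat.eq_zero_or_pos d with rfl | hd0
  · rw [Nat.sub_zero, Nat.mod_self, Nat.add_zero, Nat.zero_mod]
  · rw [show (q - d) % q = q - d from Nat.mod_eq_of_lt (by omega),
      show d + (q - d) = q from by omega, Nat.mod_self]

lemma sub_mod_inj {q d d' : ℕ} (hq : 1 ≤ q) (hd : d < q) (hd' : d' < q)
    (h : (q - d) % q = (q - d') % q) : d = d' := by
  rcases Nat.eq_zero_or_pos d with rfl | h0 <;> rcases Nat.eq_zero_or_pos d' with rfl | h0'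
  · rfl
  · rw [Nat.sub_zero, Nat.mod_self, Nat.mod_eq_of_lt (by omega)] at h
    omega
  · rw [Nat.sub_zero, Nat.mod_self, Nat.mod_eq_of_lt (by omega)] at h
    omega
  · rw [Nat.mod_eq_of_lt (by omega), Nat.mod_eq_of_lt (by omega)] at h
    omega

lemma card_ppf_mul (q : ℕ) (hq : 1 ≤ q) :
    Nat.card {w : List ℕ // w.length = q + 1 ∧ IsPrimeParkingFunction w} * q
      = q ^ (q + 1) := by
  have e : ({w : List ℕ // w.length = q + 1 ∧ IsPrimeParkingFunction w} × Fin q) ≃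
      {w : List ℕ // w.length = q + 1 ∧ ∀ x ∈ w, 1 ≤ x ∧ x ≤ q} := by
    refine Equiv.ofBijective (fun t => ⟨shiftw q t.2.val t.1.val,
      by rw [shiftw_length]; exact t.1.prop.1, shiftw_letters hq _ _⟩) ⟨?_, ?_⟩
    · rintro ⟨⟨v, hv⟩, ⟨d, hd⟩⟩ ⟨⟨v', hv'⟩, ⟨d', hd'⟩⟩ h
      have hval : shiftw q d v = shiftw q d' v' := congrArg Subtype.val h
      have hvlet : ∀ x ∈ v, 1 ≤ x ∧ x ≤ q := ((ppf_iff hq hv.1).1 hv.2).1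
      have hvlet' : ∀ x ∈ v', 1 ≤ x ∧ x ≤ q := ((ppf_iff hq hv'.1).1 hv'.2).1
      have hwlen : (shiftw q d v).length = q + 1 := by rw [shiftw_length]; exact hv.1
      obtain ⟨d₀, hd₀, huniq⟩ := exists_unique_prime_shift hq hwlen (shiftw_letters hq d v)
      have h1 : shiftw q ((q - d) % q) (shiftw q d v) = v := shiftw_inverse hq hd hvlet
      have h2 : shiftw q ((q - d') % q) (shiftw q d v) = v' := by
        rw [hval]; exact shiftw_inverse hq hd' hvlet'
      have e1 : (q - d) % q = d₀ := huniq _ ⟨Nat.mod_lt _ (by omega), by rw [h1]; exact hv.2⟩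
      have e2 : (q - d') % q = d₀ := huniq _ ⟨Nat.mod_lt _ (by omega), by rw [h2]; exact hv'.2⟩
      have hdd : d = d' := sub_mod_inj hq hd hd' (e1.trans e2.symm)
      subst hdd
      have hvv : v = v' := by rw [← h1, ← h2]
      simp only [Prod.mk.injEq, Subtype.mk.injEq]
      exact ⟨hvv, trivial⟩
    · rintro ⟨w, hw1, hw2⟩
      obtain ⟨d, ⟨hdq, hprime⟩, -⟩ := exists_unique_prime_shift hq hw1 hw2
      refine ⟨(⟨shiftw q d w, by rw [shiftw_length]; exact hw1, hprime⟩,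
        ⟨(q - d) % q, Nat.mod_lt _ (by omega)⟩), ?_⟩
      ext1
      show shiftw q ((q - d) % q) (shiftw q d w) = w
      exact shiftw_inverse hq hdq hw2
  have h1 := Nat.card_congr e
  rw [Nat.card_prod, show Nat.card (Fin q) = q by simp, card_bounded_words] at h1
  exact h1

lemma card_ppf_set (i : ℕ) (hi : 1 ≤ i) :
    Nat.card {u : List ℕ // u.length = i ∧ IsPrimeParkingFunction u}
      = (i - 1) ^ (i - 1) := by
  rcases Nat.eq_or_lt_of_le hi with h1 | h2
  · subst h1
    have : Unique {u : List ℕ // u.length = 1 ∧ IsPrimeParkingFunction u} := by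
      refine ⟨⟨⟨[1], by simp, (ppf_one (by simp)).2 rfl⟩⟩, ?_⟩
      rintro ⟨u, hu⟩
      ext1
      exact (ppf_one hu.1).1 hu.2
    rw [Nat.card_unique]
    norm_num
  · obtain ⟨q, rfl⟩ : ∃ q, i = q + 1 := ⟨i - 1, by omega⟩
    have hq : 1 ≤ q := by omega
    have h := card_ppf_mul q hq
    have hpow : q ^ (q + 1) = q ^ q * q := by ring
    rw [hpow] at h
    have := Nat.eq_of_mul_eq_mul_right (show 0 < q by omega) h
    rw [this]
    simp

/-! ### final assembly -/

lemma card_typeSet_nil :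
    Nat.card {a : List ℕ // a.length = 0 ∧ IsParkingFunction a ∧ HasType a []} = 1 := by
  have : Unique {a : List ℕ // a.length = 0 ∧ IsParkingFunction a ∧ HasType a []} := by
    refine ⟨⟨⟨[], rfl, ⟨by simp, fun i hi hle => by simp at hle; omega⟩,
      ⟨[], by simp, by simp [sconcat], by simp⟩⟩⟩, ?_⟩
    rintro ⟨a, ha⟩
    ext1
    exact List.eq_nil_of_length_eq_zero ha.1
  rw [Nat.card_unique]

lemma aux_count : ∀ (I : List ℕ) (n : ℕ), (∀ i ∈ I, 1 ≤ i) → I.sum = n →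
    Nat.card {a : List ℕ // a.length = n ∧ IsParkingFunction a ∧ HasType a I}
        * (I.map Nat.factorial).prod
      = n.factorial * (I.map fun m => (m - 1) ^ (m - 1)).prod := by
  intro I
  induction I with
  | nil =>
    intro n _ hsum
    simp only [List.sum_nil] at hsum
    subst hsum
    rw [card_typeSet_nil]
    simp [Nat.factorial]
  | cons i I' ih =>
    intro n hI hsum
    have hi : 1 ≤ i := hI i (by simp)
    have hin : i ≤ n := by
      simp only [List.sum_cons] at hsum
      omega
    have hni : n - i = I'.sum := by
      simp only [List.sum_cons] at hsum
      omega
    have ih' := ih (n - i) (fun j hj => hI j (by simp [hj])) hni.symm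
    rw [card_typeSet_cons i n I' hi hin, card_ppf_set i hi]
    simp only [List.map_cons, List.prod_cons]
    set N' := Nat.card {v : List ℕ // v.length = n - i ∧ IsParkingFunction v ∧ HasType v I'}
    set F' := (I'.map Nat.factorial).prod
    set P' := (I'.map fun m => (m - 1) ^ (m - 1)).prod
    calc n.choose i * ((i - 1) ^ (i - 1) * N') * (i.factorial * F')
        = (i - 1) ^ (i - 1) * (n.choose i * i.factorial * (N' * F')) := by ring
      _ = (i - 1) ^ (i - 1) * (n.choose i * i.factorial * ((n - i).factorial * P')) := by
          rw [ih']
      _ = (n.choose i * i.factorial * (n - i).factorial) * ((i - 1) ^ (i - 1) * P') := by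
          ring
      _ = n.factorial * ((i - 1) ^ (i - 1) * P') := by
          rw [Nat.choose_mul_factorial_mul_factorial hin]

lemma fact_dvd : ∀ (I : List ℕ) (n : ℕ), I.sum = n →
    (I.map Nat.factorial).prod ∣ n.factorial := by
  intro I
  induction I with
  | nil =>
    intro n hsum
    simp only [List.sum_nil] at hsum
    subst hsum
    simp
  | cons i I' ih =>
    intro n hsum
    simp only [List.sum_cons] at hsum
    simp only [List.map_cons, List.prod_cons]
    calc i.factorial * (I'.map Nat.factorial).prod
        ∣ i.factorial * I'.sum.factorial := mul_dvd_mul_left _ (ih I'.sum rfl)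
      _ ∣ n.factorial := by
          rw [← hsum]
          exact Nat.factorial_mul_factorial_dvd_factorial_add i I'.sum

theorem card_parkingFunctions_of_type' (n : ℕ) (I : List ℕ) (hn : 1 ≤ n)
    (hI : ∀ i ∈ I, 1 ≤ i) (hsum : I.sum = n) :
    Set.ncard {a : List ℕ | a.length = n ∧ IsParkingFunction a ∧ HasType a I} =
      (Nat.factorial n / (I.map Nat.factorial).prod) *
        (I.map fun m => (m - 1) ^ (m - 1)).prod := by
  have hN : Set.ncard {a : List ℕ | a.length = n ∧ IsParkingFunction a ∧ HasType a I}
      = Nat.card {a : List ℕ // a.length = n ∧ IsParkingFunction a ∧ HasType a I} := rfl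
  rw [hN]
  set N := Nat.card {a : List ℕ // a.length = n ∧ IsParkingFunction a ∧ HasType a I}
  set F := (I.map Nat.factorial).prod with hF
  set P := (I.map fun m => (m - 1) ^ (m - 1)).prod with hP
  have hFpos : 0 < F := by
    rw [hF]
    apply List.prod_pos
    intro x hx
    obtain ⟨m, _, rfl⟩ := List.mem_map.1 hx
    exact Nat.factorial_pos m
  obtain ⟨k, hk⟩ := fact_dvd I n hsum
  have hmain : N * F = n.factorial * P := aux_count I n hI hsum
  have hdivk : n.factorial / F = k := by
    rw [hk, Nat.mul_div_cancel_left _ hFpos]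
  rw [hdivk]
  have : N * F = (k * P) * F := by
    rw [hmain, hk]
    ring
  exact Nat.eq_of_mul_eq_mul_right hFpos this

/-- Let `I = (i₁,…,i_r)` be a composition of `n`. The number of parking functions of
length `n` of type `I` equals the multinomial coefficient `n!/(i₁!⋯i_r!)` times the
product `∏ₖ |PPF_{iₖ}|`, where `|PPF_m| = (m-1)^(m-1)` (this also gives `|PPF₁| = 1`,
since `0^0 = 1`). -/
theorem card_parkingFunctions_of_type (n : ℕ) (I : List ℕ) (hn : 1 ≤ n)
    (hI : ∀ i ∈ I, 1 ≤ i) (hsum : I.sum = n) :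
    Set.ncard {a : List ℕ | a.length = n ∧ IsParkingFunction a ∧ HasType a I} =
      (Nat.factorial n / (I.map Nat.factorial).prod) *
        (I.map fun m => (m - 1) ^ (m - 1)).prod := by
  exact card_parkingFunctions_of_type' n I hn hI hsum
end
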